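/- arXiv:2404.04157 — 3 statements merged into one kernel-verified Lean document; each statement's English description precedes it below -/
import Mathlib

section
/- For every d ∈ ℕ and all real numbers x_1,...,x_d, setting x_0 = −Σ_{l=1}^d x_l and x_γ = (1/d) Σ_{l=1}^d x_l, the identity Σ_{l=1}^d (x_l − x_0)³ = A_1 x_γ (x_0² + Σ_{l=1}^d x_l²) + A_2 Σ_{l=1}^d (x_l − x_γ)³ + A_3 [ ((3−d)/(d(d+1))) Σ_{l=1}^d x_l³ + (4/(d(d+1))) Σ_{1≤l<m≤d} ((x_l+x_m)/2)³ ] holds, where A_1 = (3/2)d(d+1), A_2 = −(1/4)d²(d−3), A_3 = (1/2)d(d+1)²(2−d). -/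
private lemma sum_cubic_aux (n : ℕ) (y : Fin n → ℝ) (A B C D : ℝ) :
    ∑ j : Fin n, (A + B * y j + C * y j ^ 2 + D * y j ^ 3)
      = (n : ℝ) * A + B * (∑ j, y j) + C * (∑ j, y j ^ 2) + D * (∑ j, y j ^ 3) := by
  rw [Finset.mul_sum, Finset.mul_sum, Finset.mul_sum,
    show ((n : ℝ) * A) = ∑ _j : Fin n, A by
      simp [Finset.sum_const, Finset.card_univ, mul_comm],
    ← Finset.sum_add_distrib, ← Finset.sum_add_distrib, ← Finset.sum_add_distrib]

/-- The symmetric cubic identity of Lemma 15, with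
`A₁ = (3/2)d(d+1)`, `A₂ = -(1/4)d²(d-3)`, `A₃ = (1/2)d(d+1)²(2-d)`. -/
theorem stmt_4 (d : ℕ) (hd : 0 < d) (x : Fin d → ℝ)
    (x0 : ℝ) (hx0 : x0 = -∑ l, x l)
    (xγ : ℝ) (hxγ : xγ = (∑ l, x l) / d) :
    ∑ l, (x l - x0) ^ 3 =
      ((3 / 2) * d * ((d : ℝ) + 1)) * xγ * (x0 ^ 2 + ∑ l, (x l) ^ 2) +
      (-(1 / 4) * (d : ℝ) ^ 2 * ((d : ℝ) - 3)) * ∑ l, (x l - xγ) ^ 3 +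
      ((1 / 2) * d * ((d : ℝ) + 1) ^ 2 * (2 - (d : ℝ))) *
        (((3 - (d : ℝ)) / ((d : ℝ) * ((d : ℝ) + 1))) * ∑ l, (x l) ^ 3 +
          (4 / ((d : ℝ) * ((d : ℝ) + 1))) *
            ∑ l, ∑ m ∈ Finset.Ioi l, ((x l + x m) / 2) ^ 3) := by
  have hd0 : (d : ℝ) ≠ 0 := Nat.cast_ne_zero.mpr hd.ne'
  have hd1 : (d : ℝ) + 1 ≠ 0 := by positivity
  set S1 : ℝ := ∑ l, x l with hS1
  set S2 : ℝ := ∑ l, (x l) ^ 2 with hS2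
  set S3 : ℝ := ∑ l, (x l) ^ 3 with hS3
  have cub : ∀ c : ℝ, ∑ l, (x l - c) ^ 3
      = (d : ℝ) * (-c ^ 3) + (3 * c ^ 2) * S1 + (-3 * c) * S2 + 1 * S3 := by
    intro c
    rw [hS1, hS2, hS3, ← sum_cubic_aux d x (-c ^ 3) (3 * c ^ 2) (-3 * c) 1]
    exact Finset.sum_congr rfl fun l _ => by ring
  -- the pair sum in terms of power sums
  have pair : ∑ l, ∑ m ∈ Finset.Ioi l, ((x l + x m) / 2) ^ 3
      = ((d : ℝ) * S3 + 3 * S1 * S2 - 4 * S3) / 8 := by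
    have h2 := Finset.sum_sum_Ioi_add_eq_sum_sum_off_diag
      (fun i j => ((x i + x j) / 2) ^ 3)
    have hL : ∑ i : Fin d, ∑ j ∈ Finset.Ioi i,
        (((x j + x i) / 2) ^ 3 + ((x i + x j) / 2) ^ 3)
        = 2 * ∑ l, ∑ m ∈ Finset.Ioi l, ((x l + x m) / 2) ^ 3 := by
      rw [Finset.mul_sum]
      refine Finset.sum_congr rfl fun l _ => ?_
      rw [Finset.mul_sum]
      exact Finset.sum_congr rfl fun m _ => by ring
    have hR : ∑ i : Fin d, ∑ j ∈ ({i}ᶜ : Finset (Fin d)), ((x j + x i) / 2) ^ 3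
        = (∑ i : Fin d, ∑ j : Fin d, ((x j + x i) / 2) ^ 3) - S3 := by
      rw [hS3, ← Finset.sum_sub_distrib]
      refine Finset.sum_congr rfl fun i _ => ?_
      have h := Finset.sum_compl_add_sum ({i} : Finset (Fin d))
        (fun j => ((x j + x i) / 2) ^ 3)
      rw [Finset.sum_singleton] at h
      have hxi : ((x i + x i) / 2) ^ 3 = x i ^ 3 := by ring
      linarith [h]
    have expand : ∀ i : Fin d, ∑ j : Fin d, ((x j + x i) / 2) ^ 3
        = (d : ℝ) * (x i ^ 3 / 8) + (3 / 8 * x i ^ 2) * S1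
            + (3 / 8 * x i) * S2 + (1 / 8) * S3 := by
      intro i
      rw [hS1, hS2, hS3, ← sum_cubic_aux d x (x i ^ 3 / 8) (3 / 8 * x i ^ 2)
        (3 / 8 * x i) (1 / 8)]
      exact Finset.sum_congr rfl fun j _ => by ring
    have hfull : ∑ i : Fin d, ∑ j : Fin d, ((x j + x i) / 2) ^ 3
        = ((d : ℝ) * S3 + 3 * S1 * S2) / 4 := by
      rw [Finset.sum_congr rfl fun i _ => expand i]
      have := sum_cubic_aux d x ((1 / 8) * S3) (3 / 8 * S2) (3 / 8 * S1) ((d : ℝ) / 8)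
      rw [show (∑ i : Fin d, ((d : ℝ) * (x i ^ 3 / 8) + (3 / 8 * x i ^ 2) * S1
          + (3 / 8 * x i) * S2 + (1 / 8) * S3))
          = ∑ i : Fin d, ((1 / 8) * S3 + (3 / 8 * S2) * x i + (3 / 8 * S1) * x i ^ 2
            + ((d : ℝ) / 8) * x i ^ 3) from
        Finset.sum_congr rfl fun i _ => by ring]
      rw [this, ← hS1, ← hS2, ← hS3]
      ring
    beta_reduce at h2
    rw [hL] at h2
    have h2' : 2 * ∑ l, ∑ m ∈ Finset.Ioi l, ((x l + x m) / 2) ^ 3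
        = (∑ i : Fin d, ∑ j : Fin d, ((x j + x i) / 2) ^ 3) - S3 := by
      rw [h2]
      convert hR using 5
    rw [hfull] at h2'
    linarith
  rw [cub x0, cub xγ, pair, hx0, hxγ]
  field_simp
  ring
end

section
/- Consider the upwind finite-volume scheme for w_t + w_x = 0 on a non-uniform mesh x_j (j ∈ ℤ, x_{j+1} > x_j): (u_j^{n+1} − u_j^n)/τ + (u_j^n − u_{j−1}^n)/ℏ_j = 0 with u_j^0 = w_0(x_j), where ℏ_j = (x_{j+1} − x_{j−1})/2. If w_0 ∈ C²(ℝ) ∩ W^{2,∞}(ℝ), w(t,x) = w_0(x−t), and τ ≤ inf_j ℏ_j, then sup_j |u_j^n − w(t_n, x_j)| ≤ t_n h_max ‖w_0''‖_∞ + h_max ‖w_0'‖_∞, where t_n = nτ and h_max = sup_j (x_{j+1} − x_j). -/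
/-- Lipschitz bound from a global derivative bound. -/
lemma upwind_lip (f : ℝ → ℝ) (M : ℝ) (hf : Differentiable ℝ f)
    (hM : ∀ y, |deriv f y| ≤ M) (a b : ℝ) : |f a - f b| ≤ M * |a - b| := by
  have := Convex.norm_image_sub_le_of_norm_deriv_le (s := (Set.univ : Set ℝ)) (f := f)
    (fun y _ => hf y) (fun y _ => by simpa [Real.norm_eq_abs] using hM y) convex_univ
    (Set.mem_univ b) (Set.mem_univ a)
  simpa [Real.norm_eq_abs] using this

/-- Truncation error bound for the upwind scheme at the staggered points. -/
lemma upwind_key (f : ℝ → ℝ) (hf : Differentiable ℝ f)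
    (M : ℝ) (hM : ∀ y, |deriv (deriv f) y| ≤ M)
    (lip : ∀ a b, |deriv f a - deriv f b| ≤ M * |a - b|)
    (s d τ : ℝ) (hτ : 0 < τ) (hτd : τ ≤ d) :
    |(1 - τ / d) * f s + (τ / d) * f (s - d) - f (s - τ)| ≤ τ * d * M := by
  have hd : 0 < d := lt_of_lt_of_le hτ hτd
  have hMnn : 0 ≤ M := le_trans (abs_nonneg _) (hM 0)
  rcases eq_or_lt_of_le hτd with heq | hlt
  · subst heq
    rw [div_self (ne_of_gt hd)]
    simp only [sub_self, zero_mul, one_mul, zero_add, abs_zero]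
    positivity
  · -- mean value theorem on [s-d, s-τ] and [s-τ, s]
    obtain ⟨c1, hc1, hs1⟩ := exists_deriv_eq_slope f (by linarith : s - d < s - τ)
      hf.continuous.continuousOn hf.differentiableOn
    obtain ⟨c2, hc2, hs2⟩ := exists_deriv_eq_slope f (by linarith : s - τ < s)
      hf.continuous.continuousOn hf.differentiableOn
    have e1 : f (s - τ) - f (s - d) = deriv f c1 * (d - τ) := by
      rw [hs1, show s - τ - (s - d) = d - τ by ring,
        div_mul_cancel₀ _ (by linarith : d - τ ≠ (0:ℝ))]
    have e2 : f s - f (s - τ) = deriv f c2 * τ := by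
      rw [hs2, show s - (s - τ) = τ by ring, div_mul_cancel₀ _ (ne_of_gt hτ)]
    have hdd : (τ / d) * d = τ := div_mul_cancel₀ τ (ne_of_gt hd)
    have hE : (1 - τ / d) * f s + (τ / d) * f (s - d) - f (s - τ)
        = τ * (1 - τ / d) * (deriv f c2 - deriv f c1) := by
      linear_combination (1 - τ / d) * e2 - (τ / d) * e1 - deriv f c1 * hdd
    have h1lam : 0 ≤ 1 - τ / d := by
      have : τ / d ≤ 1 := (div_le_one hd).mpr hτd
      linarith
    have hcc : |c2 - c1| ≤ d := by
      obtain ⟨h1, h2⟩ := hc1; obtain ⟨h3, h4⟩ := hc2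
      rw [abs_le]; constructor <;> linarith
    have habs : |deriv f c2 - deriv f c1| ≤ M * d :=
      le_trans (lip c2 c1) (mul_le_mul_of_nonneg_left hcc hMnn)
    rw [hE, abs_mul, abs_of_nonneg (mul_nonneg hτ.le h1lam)]
    have hlamd : 0 ≤ τ * M * d * (τ / d) := by positivity
    calc τ * (1 - τ / d) * |deriv f c2 - deriv f c1|
        ≤ τ * (1 - τ / d) * (M * d) :=
          mul_le_mul_of_nonneg_left habs (mul_nonneg hτ.le h1lam)
      _ ≤ τ * d * M := by nlinarith [hlamd]

/-- First-order convergence of the upwind finite-volume scheme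
`(u_j^{n+1}-u_j^n)/τ + (u_j^n-u_{j-1}^n)/ℏ_j = 0` on a non-uniform mesh:
`sup_j |u_j^n - w(t_n, x_j)| ≤ t_n h_max ‖w₀''‖_∞ + h_max ‖w₀'‖_∞`. -/
theorem stmt_7 (x : ℤ → ℝ) (hx : StrictMono x)
    (hmax : ℝ) (hhmax : ∀ j, x (j + 1) - x j ≤ hmax)
    (ℏ : ℤ → ℝ) (hℏ : ∀ j, ℏ j = (x (j + 1) - x (j - 1)) / 2)
    (τ : ℝ) (hτ : 0 < τ) (hτℏ : ∀ j, τ ≤ ℏ j)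
    (w0 : ℝ → ℝ) (hw0 : ContDiff ℝ 2 w0)
    (hb1 : BddAbove (Set.range fun y => |deriv w0 y|))
    (hb2 : BddAbove (Set.range fun y => |deriv (deriv w0) y|))
    (u : ℕ → ℤ → ℝ)
    (hu0 : ∀ j, u 0 j = w0 (x j))
    (hrec : ∀ n j, (u (n + 1) j - u n j) / τ + (u n j - u n (j - 1)) / ℏ j = 0) :
    ∀ n : ℕ, ∀ j : ℤ,
      |u n j - w0 (x j - n * τ)| ≤
        ((n : ℝ) * τ) * hmax * (⨆ y : ℝ, |deriv (deriv w0) y|) +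
          hmax * (⨆ y : ℝ, |deriv w0 y|) := by
  set M1 := ⨆ y : ℝ, |deriv w0 y| with hM1def
  set M2 := ⨆ y : ℝ, |deriv (deriv w0) y| with hM2def
  have hdw0 : Differentiable ℝ w0 := hw0.differentiable (by norm_num)
  have hdw0' : Differentiable ℝ (deriv w0) := by
    have h2 : ContDiff ℝ ((1:ℕ)+1) w0 := by exact_mod_cast hw0
    exact (contDiff_succ_iff_deriv.mp h2).2.2.differentiable (by norm_num)
  have hM1 : ∀ z, |deriv w0 z| ≤ M1 := fun z => le_ciSup hb1 z
  have hM2 : ∀ z, |deriv (deriv w0) z| ≤ M2 := fun z => le_ciSup hb2 z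
  have hM1nn : 0 ≤ M1 := le_trans (abs_nonneg _) (hM1 0)
  have hM2nn : 0 ≤ M2 := le_trans (abs_nonneg _) (hM2 0)
  have lip0 : ∀ a b, |w0 a - w0 b| ≤ M1 * |a - b| := upwind_lip w0 M1 hdw0 hM1
  have lip1 : ∀ a b, |deriv w0 a - deriv w0 b| ≤ M2 * |a - b| :=
    upwind_lip (deriv w0) M2 hdw0' hM2
  have hℏpos : ∀ j, 0 < ℏ j := fun j => lt_of_lt_of_le hτ (hτℏ j)
  have hstep : ∀ j : ℤ, 0 < x (j + 1) - x j := fun j => sub_pos.mpr (hx (by omega))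
  have hmax0 : 0 < hmax := lt_of_lt_of_le (hstep 0) (hhmax 0)
  have hℏmax : ∀ j, ℏ j ≤ hmax := by
    intro j
    have h1 := hhmax j
    have h2 := hhmax (j - 1)
    rw [show j - 1 + 1 = j by omega] at h2
    rw [hℏ j]; linarith
  set y : ℤ → ℝ := fun j => (x j + x (j + 1)) / 2 with hy
  have hyd : ∀ j, y j - y (j - 1) = ℏ j := by
    intro j
    simp only [hy]
    rw [show j - 1 + 1 = j by omega, hℏ j]
    ring
  have hyx : ∀ j, y j - x j = (x (j + 1) - x j) / 2 := by
    intro j; simp only [hy]; ring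
  -- main induction at the staggered points y j
  have key : ∀ n : ℕ, ∀ j : ℤ,
      |u n j - w0 (y j - n * τ)| ≤ hmax / 2 * M1 + (n : ℝ) * τ * hmax * M2 := by
    intro n
    induction n with
    | zero =>
      intro j
      rw [hu0 j]
      push_cast
      have h := lip0 (x j) (y j - 0 * τ)
      have harg : |x j - (y j - 0 * τ)| ≤ hmax / 2 := by
        rw [show x j - (y j - 0 * τ) = -(y j - x j) by ring, abs_neg, hyx j,
          abs_of_nonneg (by linarith [hstep j])]
        linarith [hhmax j]
      calc |w0 (x j) - w0 (y j - 0 * τ)| ≤ M1 * |x j - (y j - 0 * τ)| := h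
        _ ≤ M1 * (hmax / 2) := mul_le_mul_of_nonneg_left harg hM1nn
        _ ≤ hmax / 2 * M1 + 0 * τ * hmax * M2 := by nlinarith
    | succ n ih =>
      intro j
      have hℏj := hℏpos j
      have hu' : u (n + 1) j = (1 - τ / ℏ j) * u n j + (τ / ℏ j) * u n (j - 1) := by
        have h0 : (u (n + 1) j - u n j) / τ = -((u n j - u n (j - 1)) / ℏ j) := by
          linarith [hrec n j]
        have h1 : u (n + 1) j - u n j = -((u n j - u n (j - 1)) / ℏ j) * τ :=
          (div_eq_iff (ne_of_gt hτ)).mp h0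
        field_simp at h1 ⊢
        linarith
      have hE := upwind_key w0 hdw0 M2 hM2 lip1 (y j - n * τ) (ℏ j) τ hτ (hτℏ j)
      have hsd : y j - (n : ℝ) * τ - ℏ j = y (j - 1) - (n : ℝ) * τ := by
        have := hyd j; linarith
      rw [hsd] at hE
      push_cast
      have harg : y j - ((n : ℝ) + 1) * τ = y j - (n : ℝ) * τ - τ := by ring
      rw [harg]
      have decomp : u (n + 1) j - w0 (y j - (n : ℝ) * τ - τ)
          = (1 - τ / ℏ j) * (u n j - w0 (y j - (n : ℝ) * τ))
            + (τ / ℏ j) * (u n (j - 1) - w0 (y (j - 1) - (n : ℝ) * τ))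
            + ((1 - τ / ℏ j) * w0 (y j - (n : ℝ) * τ)
               + (τ / ℏ j) * w0 (y (j - 1) - (n : ℝ) * τ)
               - w0 (y j - (n : ℝ) * τ - τ)) := by
        rw [hu']; ring
      have hlam0 : 0 ≤ τ / ℏ j := div_nonneg hτ.le hℏj.le
      have hlam1 : τ / ℏ j ≤ 1 := (div_le_one hℏj).mpr (hτℏ j)
      have p1 : (1 - τ / ℏ j) * |u n j - w0 (y j - (n : ℝ) * τ)|
          ≤ (1 - τ / ℏ j) * (hmax / 2 * M1 + (n : ℝ) * τ * hmax * M2) :=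
        mul_le_mul_of_nonneg_left (ih j) (by linarith)
      have p2 : (τ / ℏ j) * |u n (j - 1) - w0 (y (j - 1) - (n : ℝ) * τ)|
          ≤ (τ / ℏ j) * (hmax / 2 * M1 + (n : ℝ) * τ * hmax * M2) :=
        mul_le_mul_of_nonneg_left (ih (j - 1)) hlam0
      have p3 : τ * ℏ j * M2 ≤ τ * hmax * M2 :=
        mul_le_mul_of_nonneg_right (mul_le_mul_of_nonneg_left (hℏmax j) hτ.le) hM2nn
      calc |u (n + 1) j - w0 (y j - (n : ℝ) * τ - τ)|
          ≤ |(1 - τ / ℏ j) * (u n j - w0 (y j - (n : ℝ) * τ))|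
            + |(τ / ℏ j) * (u n (j - 1) - w0 (y (j - 1) - (n : ℝ) * τ))|
            + |(1 - τ / ℏ j) * w0 (y j - (n : ℝ) * τ)
               + (τ / ℏ j) * w0 (y (j - 1) - (n : ℝ) * τ)
               - w0 (y j - (n : ℝ) * τ - τ)| := by
            rw [decomp]; exact abs_add_three _ _ _
        _ ≤ hmax / 2 * M1 + ((n : ℝ) + 1) * τ * hmax * M2 := by
            rw [abs_mul, abs_mul, abs_of_nonneg (by linarith : (0:ℝ) ≤ 1 - τ / ℏ j),
              abs_of_nonneg hlam0]
            nlinarith [p1, p2, p3, hE]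
  -- conclude
  intro n j
  have h1 := key n j
  have h2 : |w0 (y j - n * τ) - w0 (x j - n * τ)| ≤ M1 * (hmax / 2) := by
    have h := lip0 (y j - n * τ) (x j - n * τ)
    have harg : |y j - (n : ℝ) * τ - (x j - (n : ℝ) * τ)| ≤ hmax / 2 := by
      rw [show y j - (n : ℝ) * τ - (x j - (n : ℝ) * τ) = y j - x j by ring, hyx j,
        abs_of_nonneg (by linarith [hstep j])]
      linarith [hhmax j]
    calc |w0 (y j - n * τ) - w0 (x j - n * τ)|
        ≤ M1 * |y j - (n : ℝ) * τ - (x j - (n : ℝ) * τ)| := h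
      _ ≤ M1 * (hmax / 2) := mul_le_mul_of_nonneg_left harg hM1nn
  calc |u n j - w0 (x j - n * τ)|
      ≤ |u n j - w0 (y j - n * τ)| + |w0 (y j - n * τ) - w0 (x j - n * τ)| := by
        have := abs_sub_le (u n j) (w0 (y j - n * τ)) (w0 (x j - n * τ)); linarith
    _ ≤ ((n : ℝ) * τ) * hmax * M2 + hmax * M1 := by linarith
end

section
/- Let V be a vector space of sequences indexed by a mesh, let T : V → V be a linear translation operator with T^a = Id for a = 1/L ∈ ℕ, and let A : V → V be a linear operator commuting with T. Let V^L = {f ∈ V : T f = f} be the fixed subspace and Ă the restriction of A to V^L. Then Im Ă = (Im A) ∩ V^L. -/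
/-- If `T^a = 1` and `A` commutes with `T`, then the image of the restriction of `A` to the
fixed subspace `V^L = {f : T f = f}` equals `Im A ∩ V^L`. -/
theorem stmt_8 {V : Type*} [AddCommGroup V] [Module ℂ V]
    (T A : V →ₗ[ℂ] V) (a : ℕ) (ha : 0 < a) (hT : T ^ a = 1)
    (hcomm : A * T = T * A) :
    (⇑A) '' {f | T f = f} = Set.range (⇑A) ∩ {f | T f = f} := by
  have hcomm' : ∀ (i : ℕ) (v : V), A ((T ^ i) v) = (T ^ i) (A v) := by
    intro i v
    have : A * T ^ i = T ^ i * A := (Commute.pow_right hcomm i)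
    exact congrFun (congrArg DFunLike.coe this) v
  ext g
  constructor
  · rintro ⟨f, hf, rfl⟩
    refine ⟨⟨f, rfl⟩, ?_⟩
    have : T (A f) = A (T f) := (congrFun (congrArg DFunLike.coe hcomm.symm) f)
    rw [Set.mem_setOf_eq, this, show T f = f from hf]
  · rintro ⟨⟨f, rfl⟩, hg⟩
    have hg' : ∀ i : ℕ, (T ^ i) (A f) = A f := by
      intro i
      induction i with
      | zero => simp
      | succ n ih => rw [pow_succ', Module.End.mul_apply, ih]; exact hg
    obtain ⟨m, rfl⟩ := Nat.exists_eq_succ_of_ne_zero ha.ne'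
    refine ⟨((m + 1 : ℕ) : ℂ)⁻¹ • ∑ i ∈ Finset.range (m + 1), (T ^ i) f, ?_, ?_⟩
    · show T _ = _
      rw [map_smul, map_sum]
      congr 1
      have h1 : ∀ i, T ((T ^ i) f) = (T ^ (i + 1)) f := by
        intro i; rw [pow_succ', Module.End.mul_apply]
      simp only [h1]
      rw [Finset.sum_range_succ, Finset.sum_range_succ']
      have : (T ^ (m + 1)) f = f := by rw [hT]; rfl
      rw [this]
      simp
    · rw [map_smul, map_sum]
      simp only [hcomm', hg']
      rw [Finset.sum_const, Finset.card_range]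
      rw [← Nat.cast_smul_eq_nsmul ℂ, smul_smul,
        inv_mul_cancel₀ (by exact_mod_cast Nat.succ_ne_zero m), one_smul]
end
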